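/- Let P1 and P2 be propositional normal programs with no head atom of P2 occurring in P1, let M1 be an answer set of P1, and let M = M1 ∪ M2 be an answer set of P = P1 ∪ sat(clone(P2)). Then M' is an answer set of P2 ∪ fix_P(M) if and only if M' = M2 ∪ M2' where M2' is an answer set of P2 ∪ fix_{P1}(M1). -/

import Mathlib

open Classical

/-- A propositional normal rule: optional head (none = constraint),
positive body atoms and (default-)negated body atoms. -/
structure ARule (α : Type) where
  head : Option α
  pos : Set α
  neg : Set α

/-- A propositional normal logic program. -/
abbrev AProgram (α : Type) := Set (ARule α)

namespace ASP

variable {α : Type}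

def ARule.headSet (r : ARule α) : Set α := {a | r.head = some a}

def ARule.atoms (r : ARule α) : Set α := ARule.headSet r ∪ r.pos ∪ r.neg

def progAtoms (P : AProgram α) : Set α := ⋃ r ∈ P, ARule.atoms r

def heads (P : AProgram α) : Set α := {a | ∃ r ∈ P, r.head = some a}

/-- The body of a rule is true in interpretation `I`. -/
def bodyTrue (I : Set α) (r : ARule α) : Prop :=
  r.pos ⊆ I ∧ ∀ a ∈ r.neg, a ∉ I

/-- `I` satisfies rule `r`. -/
def satRule (I : Set α) (r : ARule α) : Prop :=
  bodyTrue I r → ∃ h, r.head = some h ∧ h ∈ I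

def isModel (I : Set α) (P : AProgram α) : Prop := ∀ r ∈ P, satRule I r

/-- Gelfond–Lifschitz reduct of `P` with respect to `I`. -/
def reduct (P : AProgram α) (I : Set α) : AProgram α :=
  {r' | ∃ r ∈ P, (∀ a ∈ r.neg, a ∉ I) ∧ r' = ⟨r.head, r.pos, ∅⟩}

/-- `I` is an answer set of `P`: a minimal model of the reduct `P^I`. -/
def isAnswerSet (P : AProgram α) (I : Set α) : Prop :=
  isModel I (reduct P I) ∧ ∀ J, J ⊂ I → ¬ isModel J (reduct P I)

/-- A program is coherent if it has an answer set. -/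
def coherent (P : AProgram α) : Prop := ∃ I, isAnswerSet P I

/-- `fix B M`: facts for atoms of `M` and constraints for atoms of `B \ M`. -/
def fixProg (B M : Set α) : AProgram α :=
  {r | (∃ a ∈ M, r = ⟨some a, ∅, ∅⟩) ∨ (∃ a ∈ B \ M, r = ⟨none, {a}, ∅⟩)}

/-- A ground weak constraint `:~ pos, not neg [weight@level]`. -/
structure WeakC (α : Type) where
  pos : Set α
  neg : Set α
  weight : ℤ
  level : ℤ

def WeakC.atoms (w : WeakC α) : Set α := w.pos ∪ w.neg

/-- The body of a weak constraint is true in `I` (the weak constraint is violated). -/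
def WeakC.violated (w : WeakC α) (I : Set α) : Prop :=
  w.pos ⊆ I ∧ ∀ a ∈ w.neg, a ∉ I

/-- Cost of interpretation `I` at level `l` for weak constraints `W`. -/
noncomputable def cost (W : Finset (WeakC α)) (I : Set α) (l : ℤ) : ℤ :=
  ∑ w ∈ W.filter (fun w => w.level = l ∧ WeakC.violated w I), w.weight

/-- `I` is dominated by `J` with respect to the weak constraints `W`. -/
def dominated (W : Finset (WeakC α)) (I J : Set α) : Prop :=
  ∃ l, cost W I l > cost W J l ∧ ∀ l' > l, cost W I l' = cost W J l'

/-- `M` is an optimal answer set of program `P` with weak constraints `W`. -/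
def optAS (P : AProgram α) (W : Finset (WeakC α)) (M : Set α) : Prop :=
  isAnswerSet P M ∧ ∀ M', isAnswerSet P M' → ¬ dominated W M M'

/-- `sat(P)`: add `not s` to each rule body, plus a choice on the fresh atom `s`
 (rules `s :- not n` and `n :- not s`). -/
def satProg (s n : α) (P : AProgram α) : AProgram α :=
  ((fun r : ARule α => ARule.mk r.head r.pos (insert s r.neg)) '' P) ∪
    {⟨some s, ∅, {n}⟩, ⟨some n, ∅, {s}⟩}

/-- Complement `¬P` of a program with constraints: each constraint `:- B` becomes
 `v :- B`, and the constraint `:- not v` is added. -/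
def complProg (v : α) (P : AProgram α) : AProgram α :=
  {r | r ∈ P ∧ r.head ≠ none} ∪
    {r' | ∃ r ∈ P, r.head = none ∧ r' = ⟨some v, r.pos, r.neg⟩} ∪
    {⟨none, ∅, {v}⟩}

/-- Rules of `relaxed(P,l)`: keep rules with heads, turn each constraint `:- B`
into `unsat :- B`. -/
def relaxedRules (u : α) (P : AProgram α) : AProgram α :=
  {r | r ∈ P ∧ r.head ≠ none} ∪
    {r' | ∃ r ∈ P, r.head = none ∧ r' = ⟨some u, r.pos, r.neg⟩}

/-- The weak constraint `:~ unsat [1@l]` of `relaxed(P,l)`. -/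
def relaxWeak (u : α) (l : ℤ) : WeakC α := ⟨{u}, ∅, 1, l⟩

/-- A stratification: positive dependencies do not increase the level,
negative dependencies strictly decrease it. -/
def IsStratification (P : AProgram α) (lv : α → ℕ) : Prop :=
  ∀ r ∈ P, ∀ h, r.head = some h →
    (∀ a ∈ r.pos, lv a ≤ lv h) ∧ (∀ a ∈ r.neg, lv a < lv h)

def Stratified (P : AProgram α) : Prop := ∃ lv, IsStratification P lv

/-- `M` (an answer set of a program with atom base `B`) satisfies the constraint
program `C` iff `C ∪ fix_B(M)` is coherent. -/
def satisfiesC (C : AProgram α) (B M : Set α) : Prop := coherent (C ∪ fixProg B M)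

end ASP

open ASP

/-- Renaming a rule by an atom substitution `ρ`. -/
def renameRule {α : Type} (ρ : α → α) (r : ARule α) : ARule α :=
  ⟨r.head.map ρ, ρ '' r.pos, ρ '' r.neg⟩

/-- Renaming a program by an atom substitution `ρ`. -/
def renameProg {α : Type} (ρ : α → α) (P : AProgram α) : AProgram α :=
  renameRule ρ '' P

/-- `clone(P)`: rename every head atom `p` of `P` (wherever it occurs in `P`)
to the fresh atom `cl p`; non-head atoms are left unchanged. -/
noncomputable def cloneProg {α : Type} (cl : α → α) (P : AProgram α) : AProgram α :=
  renameProg (fun a => if a ∈ heads P then cl a else a) P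

/-!
Write `M = M1 ∪ M2` and `S = sat(clone(P2))`; no head of `S` is an atom of `P1` or of `P2`.
Hence `M1 ∪ (M \ atoms(P1))` is a model of the reduct of `P1 ∪ S` with respect to `M`, and
minimality of `M` shows that `M` agrees with `M1` on the atoms of `P1`; as the atoms of `P2` in `M`
are heads of `P1`, `M` and `M1` also agree on the atoms of `P2`. No head of `P2` occurs in
`P1 ∪ S`, so the constraints of both `fix` programs are redundant: the answer sets of
`P2 ∪ fix_B(X)` are those of `P2` on top of the facts `X`, which depend on `X` only through the
atoms of `P2`, the remaining facts being carried along unchanged.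
-/
namespace ASP

variable {α : Type}

theorem atoms_subset_progAtoms {P : AProgram α} {r : ARule α} (hr : r ∈ P) :
    ARule.atoms r ⊆ progAtoms P :=
  fun _ ha => Set.mem_biUnion hr ha

theorem heads_subset_progAtoms (P : AProgram α) : heads P ⊆ progAtoms P := by
  rintro a ⟨r, hr, hhd⟩
  exact atoms_subset_progAtoms hr (Or.inl (Or.inl hhd))

theorem heads_union (P Q : AProgram α) : heads (P ∪ Q) = heads P ∪ heads Q := by
  ext a
  simp only [heads, Set.mem_union, or_and_right, exists_or]
  rfl

theorem progAtoms_union (P Q : AProgram α) :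
    progAtoms (P ∪ Q) = progAtoms P ∪ progAtoms Q :=
  Set.biUnion_union P Q ARule.atoms

theorem heads_satProg_subset (s n : α) (P : AProgram α) :
    heads (satProg s n P) ⊆ insert s (insert n (heads P)) := by
  rintro a ⟨r, ⟨r₀, hr₀, rfl⟩ | rfl | rfl, hhd⟩
  · exact Or.inr (Or.inr ⟨r₀, hr₀, hhd⟩)
  · exact Or.inl (Option.some.inj hhd).symm
  · exact Or.inr (Or.inl (Option.some.inj hhd).symm)

theorem progAtoms_satProg_subset (s n : α) (P : AProgram α) :
    progAtoms (satProg s n P) ⊆ insert s (insert n (progAtoms P)) := by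
  intro a ha
  simp only [progAtoms, Set.mem_iUnion, exists_prop] at ha
  obtain ⟨r, ⟨r₀, hr₀, rfl⟩ | rfl | rfl, (hh | hp) | hn⟩ := ha
  · exact Or.inr (Or.inr (atoms_subset_progAtoms hr₀ (Or.inl (Or.inl hh))))
  · exact Or.inr (Or.inr (atoms_subset_progAtoms hr₀ (Or.inl (Or.inr hp))))
  · rcases hn with rfl | hn
    · exact Or.inl rfl
    · exact Or.inr (Or.inr (atoms_subset_progAtoms hr₀ (Or.inr hn)))
  · exact Or.inl (Option.some.inj hh).symm
  · exact absurd hp (Set.notMem_empty a)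
  · exact Or.inr (Or.inl hn)
  · exact Or.inr (Or.inl (Option.some.inj hh).symm)
  · exact absurd hp (Set.notMem_empty a)
  · exact Or.inl hn

theorem progAtoms_renameProg_subset (ρ : α → α) (P : AProgram α) :
    progAtoms (renameProg ρ P) ⊆ ρ '' progAtoms P := by
  intro a ha
  simp only [progAtoms, Set.mem_iUnion, exists_prop] at ha
  obtain ⟨_, ⟨r, hr, rfl⟩, (hh | ⟨b, hb, rfl⟩) | ⟨b, hb, rfl⟩⟩ := ha
  · obtain ⟨b, hb, rfl⟩ := Option.map_eq_some_iff.mp hh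
    exact ⟨b, atoms_subset_progAtoms hr (Or.inl (Or.inl hb)), rfl⟩
  · exact ⟨b, atoms_subset_progAtoms hr (Or.inl (Or.inr hb)), rfl⟩
  · exact ⟨b, atoms_subset_progAtoms hr (Or.inr hb), rfl⟩

theorem heads_cloneProg_subset (cl : α → α) (P : AProgram α) :
    heads (cloneProg cl P) ⊆ cl '' heads P := by
  rintro a ⟨_, ⟨r, hr, rfl⟩, hhd⟩
  obtain ⟨b, hb, rfl⟩ := Option.map_eq_some_iff.mp hhd
  have hbP : b ∈ heads P := ⟨r, hr, hb⟩
  exact ⟨b, hbP, (if_pos hbP).symm⟩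

theorem progAtoms_cloneProg_subset (cl : α → α) (P : AProgram α) :
    progAtoms (cloneProg cl P) ⊆ (progAtoms P \ heads P) ∪ cl '' heads P := by
  intro a ha
  obtain ⟨b, hb, rfl⟩ := progAtoms_renameProg_subset _ P ha
  by_cases hbP : b ∈ heads P
  · exact Or.inr ⟨b, hbP, (if_pos hbP).symm⟩
  · simp only [if_neg hbP]
    exact Or.inl ⟨hb, hbP⟩

theorem isModel_union {I : Set α} {P Q : AProgram α} :
    isModel I (P ∪ Q) ↔ isModel I P ∧ isModel I Q :=
  ⟨fun h => ⟨fun r hr => h r (Or.inl hr), fun r hr => h r (Or.inr hr)⟩,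
    fun h r hr => hr.elim (h.1 r) (h.2 r)⟩

theorem isModel_reduct_iff {P : AProgram α} {I J : Set α} :
    isModel J (reduct P I) ↔
      ∀ r ∈ P, (∀ a ∈ r.neg, a ∉ I) → r.pos ⊆ J → ∃ h, r.head = some h ∧ h ∈ J := by
  constructor
  · intro hJ r hr hneg hpos
    exact hJ ⟨r.head, r.pos, ∅⟩ ⟨r, hr, hneg, rfl⟩ ⟨hpos, fun _ h => absurd h (Set.notMem_empty _)⟩
  · rintro hJ _ ⟨r, hr, hneg, rfl⟩ hbody
    exact hJ r hr hneg hbody.1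

theorem reduct_union (P Q : AProgram α) (I : Set α) :
    reduct (P ∪ Q) I = reduct P I ∪ reduct Q I := by
  ext r'
  simp only [reduct, Set.mem_union, or_and_right, exists_or]
  rfl

theorem reduct_fixProg (B M I : Set α) : reduct (fixProg B M) I = fixProg B M := by
  ext r'
  constructor
  · rintro ⟨r, ⟨a, ha, rfl⟩ | ⟨a, ha, rfl⟩, -, rfl⟩
    · exact Or.inl ⟨a, ha, rfl⟩
    · exact Or.inr ⟨a, ha, rfl⟩
  · rintro (⟨a, ha, rfl⟩ | ⟨a, ha, rfl⟩)
    · exact ⟨⟨some a, ∅, ∅⟩, Or.inl ⟨a, ha, rfl⟩, fun _ h => absurd h (Set.notMem_empty _), rfl⟩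
    · exact ⟨⟨none, {a}, ∅⟩, Or.inr ⟨a, ha, rfl⟩, fun _ h => absurd h (Set.notMem_empty _), rfl⟩

theorem isModel_fixProg_iff {B M I : Set α} :
    isModel I (fixProg B M) ↔ M ⊆ I ∧ ∀ a ∈ B, a ∉ M → a ∉ I := by
  constructor
  · intro h
    refine ⟨fun a ha => ?_, fun a haB haM haI => ?_⟩
    · obtain ⟨_, ⟨⟩, hI⟩ := h _ (Or.inl ⟨a, ha, rfl⟩)
        ⟨Set.empty_subset I, fun _ h => absurd h (Set.notMem_empty _)⟩
      exact hI
    · obtain ⟨_, ⟨⟩, -⟩ := h _ (Or.inr ⟨a, ⟨haB, haM⟩, rfl⟩)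
        ⟨Set.singleton_subset_iff.mpr haI, fun _ h => absurd h (Set.notMem_empty _)⟩
  · rintro ⟨hMI, hBI⟩ r (⟨a, ha, rfl⟩ | ⟨a, ha, rfl⟩) hbody
    · exact ⟨a, rfl, hMI ha⟩
    · exact absurd (hbody.1 rfl) (hBI a ha.1 ha.2)

theorem isModel_reduct_congr {P : AProgram α} {I I' J J' : Set α}
    (hI : ∀ a ∈ progAtoms P, a ∈ I ↔ a ∈ I') (hJ : ∀ a ∈ progAtoms P, a ∈ J ↔ a ∈ J')
    (h : isModel J (reduct P I)) : isModel J' (reduct P I') := by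
  rw [isModel_reduct_iff] at h ⊢
  intro r hr hneg hpos
  have hatoms := atoms_subset_progAtoms hr
  obtain ⟨b, hb, hbJ⟩ := h r hr
    (fun a ha haI => hneg a ha ((hI a (hatoms (Or.inr ha))).mp haI))
    (fun a ha => (hJ a (hatoms (Or.inl (Or.inr ha)))).mpr (hpos ha))
  exact ⟨b, hb, (hJ b (hatoms (Or.inl (Or.inl hb)))).mp hbJ⟩

/-- `N` is an answer set of `P` extended by the facts `X`. -/
def IsAnswerSetOver (P : AProgram α) (X N : Set α) : Prop :=
  X ⊆ N ∧ isModel N (reduct P N) ∧ ∀ J, X ⊆ J → J ⊂ N → ¬ isModel J (reduct P N)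

theorem IsAnswerSetOver.subset_union_heads {P : AProgram α} {X N : Set α}
    (h : IsAnswerSetOver P X N) : N ⊆ X ∪ heads P := by
  by_contra hN
  refine h.2.2 (N ∩ (X ∪ heads P)) (Set.subset_inter h.1 Set.subset_union_left)
    (Set.inter_ssubset_left_iff.mpr hN) ?_
  rw [isModel_reduct_iff]
  intro r hr hneg hpos
  obtain ⟨b, hb, hbN⟩ := isModel_reduct_iff.mp h.2.1 r hr hneg (hpos.trans Set.inter_subset_left)
  exact ⟨b, hb, hbN, Or.inr ⟨r, hr, hb⟩⟩

theorem isAnswerSet.subset_heads {P : AProgram α} {N : Set α} (h : isAnswerSet P N) :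
    N ⊆ heads P := by
  simpa using IsAnswerSetOver.subset_union_heads
    (X := ∅) ⟨Set.empty_subset N, h.1, fun J _ => h.2 J⟩

theorem isAnswerSet_union_fixProg_iff {P : AProgram α} {B X N : Set α}
    (hB : Disjoint (heads P) B) :
    isAnswerSet (P ∪ fixProg B X) N ↔ IsAnswerSetOver P X N := by
  simp only [isAnswerSet, IsAnswerSetOver, reduct_union, reduct_fixProg, isModel_union,
    isModel_fixProg_iff]
  constructor
  · rintro ⟨⟨hN, hXN, hBN⟩, hmin⟩
    exact ⟨hXN, hN, fun J hXJ hJN hJ =>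
      hmin J hJN ⟨hJ, hXJ, fun a haB haX haJ => hBN a haB haX (hJN.subset haJ)⟩⟩
  · intro h
    refine ⟨⟨h.2.1, h.1, fun a haB haX haN => ?_⟩,
      fun J hJN hJ => h.2.2 J hJ.2.1 hJN hJ.1⟩
    rcases IsAnswerSetOver.subset_union_heads h haN with haX' | haP
    · exact haX haX'
    · exact Set.disjoint_left.mp hB haP haB

theorem IsAnswerSetOver.of_inter_progAtoms_eq {P : AProgram α} {X X' Y : Set α}
    (hX : X ∩ progAtoms P = X' ∩ progAtoms P) (hY : Y ⊆ progAtoms P)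
    (h : IsAnswerSetOver P X (X ∪ Y)) : IsAnswerSetOver P X' (X' ∪ Y) := by
  have hXX' : ∀ a ∈ progAtoms P, a ∈ X ↔ a ∈ X' := fun a ha => by
    simpa [ha] using Set.ext_iff.mp hX a
  have hN : ∀ a ∈ progAtoms P, a ∈ X ∪ Y ↔ a ∈ X' ∪ Y := fun a ha => by
    simp only [Set.mem_union, hXX' a ha]
  refine ⟨Set.subset_union_left, isModel_reduct_congr hN hN h.2.1, ?_⟩
  intro J hXJ hJN hJ
  obtain ⟨y, hyN, hyJ⟩ := Set.exists_of_ssubset hJN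
  have hyY : y ∈ Y := hyN.resolve_left fun hyX' => hyJ (hXJ hyX')
  -- move `J` back over `X` by swapping `X'` for `X`; on the atoms of `P` nothing changes
  refine h.2.2 (X ∪ (J \ X')) Set.subset_union_left ?_ ?_
  · refine Set.ssubset_iff_subset_ne.mpr ⟨?_, fun hEq => ?_⟩
    · exact Set.union_subset_union_right X fun a ha =>
        (hJN.subset ha.1).resolve_left ha.2
    · have hy : y ∈ X ∪ (J \ X') := hEq ▸ Or.inr hyY
      rcases hy with hyX | hyJ'
      · exact hyJ (hXJ ((hXX' y (hY hyY)).mp hyX))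
      · exact hyJ hyJ'.1
  · refine isModel_reduct_congr (fun a ha => (hN a ha).symm) (fun a ha => ?_) hJ
    rw [Set.mem_union, Set.mem_sdiff, hXX' a ha]
    exact ⟨fun haJ => (Classical.em (a ∈ X')).imp_right fun haX' => ⟨haJ, haX'⟩,
      fun h => h.elim (fun haX' => hXJ haX') And.left⟩

theorem isAnswerSetOver_union_iff {P : AProgram α} {X Z N : Set α}
    (hZ : Z ∩ progAtoms P ⊆ X) :
    IsAnswerSetOver P (X ∪ Z) N ↔ ∃ N', N = Z ∪ N' ∧ IsAnswerSetOver P X N' := by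
  have hXZ : (X ∪ Z) ∩ progAtoms P = X ∩ progAtoms P := by
    rw [Set.union_inter_distrib_right, Set.union_eq_left]
    exact Set.subset_inter hZ Set.inter_subset_right
  constructor
  · intro h
    have hN : N = (X ∪ Z) ∪ (N \ (X ∪ Z)) := (Set.union_sdiff_cancel h.1).symm
    have hY : N \ (X ∪ Z) ⊆ progAtoms P := fun a ha =>
      heads_subset_progAtoms P ((h.subset_union_heads ha.1).resolve_left ha.2)
    refine ⟨X ∪ (N \ (X ∪ Z)), ?_, IsAnswerSetOver.of_inter_progAtoms_eq hXZ hY (hN ▸ h)⟩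
    conv_lhs => rw [hN]
    ac_rfl
  · rintro ⟨N', rfl, h⟩
    have hN' : N' = X ∪ (N' \ X) := (Set.union_sdiff_cancel h.1).symm
    have hY : N' \ X ⊆ progAtoms P := fun a ha =>
      heads_subset_progAtoms P ((h.subset_union_heads ha.1).resolve_left ha.2)
    have h' := IsAnswerSetOver.of_inter_progAtoms_eq hXZ.symm hY (hN' ▸ h)
    rwa [hN', ← Set.union_assoc, Set.union_comm Z X]

theorem isAnswerSet.inter_progAtoms_subset {P Q : AProgram α} {M₁ M : Set α}
    (hM : isAnswerSet (P ∪ Q) M) (hQ : Disjoint (heads Q) (progAtoms P))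
    (hM₁ : isAnswerSet P M₁) (hM₁M : M₁ ⊆ M) : M ∩ progAtoms P ⊆ M₁ := by
  set J := M₁ ∪ (M \ progAtoms P)
  have hJM : J ⊆ M := Set.union_subset hM₁M Set.sdiff_subset
  have hJ : isModel J (reduct (P ∪ Q) M) := by
    rw [isModel_reduct_iff]
    rintro r (hrP | hrQ) hneg hpos
    · have hposM₁ : r.pos ⊆ M₁ := fun a ha =>
        (hpos ha).resolve_right fun h => h.2 (atoms_subset_progAtoms hrP (Or.inl (Or.inr ha)))
      obtain ⟨b, hb, hbM₁⟩ := isModel_reduct_iff.mp hM₁.1 r hrP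
        (fun a ha haM₁ => hneg a ha (hM₁M haM₁)) hposM₁
      exact ⟨b, hb, Or.inl hbM₁⟩
    · obtain ⟨b, hb, hbM⟩ := isModel_reduct_iff.mp hM.1 r (Or.inr hrQ) hneg (hpos.trans hJM)
      exact ⟨b, hb, Or.inr ⟨hbM, Set.disjoint_left.mp hQ ⟨r, hrQ, hb⟩⟩⟩
  have hJeq : J = M := by
    by_contra hne
    exact hM.2 J (Set.ssubset_iff_subset_ne.mpr ⟨hJM, hne⟩) hJ
  rintro a ⟨haM, haP⟩
  rw [← hJeq] at haM
  exact haM.resolve_right fun h => h.2 haP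

end ASP

open ASP in
theorem clone_fix_answer_sets_general {α : Type} (P1 P2 : AProgram α)
    (cl : α → α) (s n : α)
    (hheads : ∀ a ∈ heads P2, a ∉ progAtoms P1)
    (hfresh : ∀ a ∈ heads P2,
      cl a ∉ progAtoms P1 ∪ progAtoms P2 ∧ cl a ≠ s ∧ cl a ≠ n)
    (hs : s ∉ progAtoms P1 ∪ progAtoms P2) (hn : n ∉ progAtoms P1 ∪ progAtoms P2)
    (M1 M2 : Set α) (hM1 : isAnswerSet P1 M1)
    (hM : isAnswerSet (P1 ∪ satProg s n (cloneProg cl P2)) (M1 ∪ M2)) (M' : Set α) :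
    isAnswerSet
        (P2 ∪ fixProg (progAtoms (P1 ∪ satProg s n (cloneProg cl P2))) (M1 ∪ M2)) M' ↔
      ∃ M2', M' = M2 ∪ M2' ∧ isAnswerSet (P2 ∪ fixProg (progAtoms P1) M1) M2' := by
  set S := satProg s n (cloneProg cl P2)
  have hS : ∀ a ∈ heads S, a ∉ progAtoms P1 ∪ progAtoms P2 := by
    intro a ha
    rcases heads_satProg_subset s n _ ha with rfl | rfl | hc
    · exact hs
    · exact hn
    obtain ⟨b, hb, rfl⟩ := heads_cloneProg_subset cl P2 hc
    exact (hfresh b hb).1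
  have hB : Disjoint (heads P2) (progAtoms (P1 ∪ S)) := by
    rw [progAtoms_union, Set.disjoint_union_right]
    refine ⟨Set.disjoint_left.mpr hheads, Set.disjoint_left.mpr fun a ha haS => ?_⟩
    have ha2 := heads_subset_progAtoms P2 ha
    rcases progAtoms_satProg_subset s n _ haS with rfl | rfl | hc
    · exact hs (Or.inr ha2)
    · exact hn (Or.inr ha2)
    rcases progAtoms_cloneProg_subset cl P2 hc with hc | ⟨b, hb, rfl⟩
    · exact hc.2 ha
    · exact (hfresh b hb).1 (Or.inr ha2)
  have hM2 : M2 ∩ progAtoms P2 ⊆ M1 := by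
    rintro a ⟨haM2, ha2⟩
    have haM : a ∈ M1 ∪ M2 := Or.inr haM2
    rcases (heads_union P1 S ▸ hM.subset_heads) haM with ha1 | haS
    · exact hM.inter_progAtoms_subset (Set.disjoint_left.mpr fun b hb => (hS b hb <| Or.inl ·))
        hM1 Set.subset_union_left ⟨haM, heads_subset_progAtoms P1 ha1⟩
    · exact absurd (Or.inr ha2) (hS a haS)
  rw [isAnswerSet_union_fixProg_iff hB, isAnswerSetOver_union_iff hM2]
  simp only [isAnswerSet_union_fixProg_iff (Set.disjoint_left.mpr hheads)]

open ASP in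
/-- with `M = M1 ∪ M2` an answer set of `P = P1 ∪ sat(clone(P2))`
where `M1` is an answer set of `P1`, the answer sets of `P2 ∪ fix_P(M)` are
exactly the sets `M2 ∪ M2'` with `M2'` an answer set of `P2 ∪ fix_{P1}(M1)`. -/
theorem clone_fix_answer_sets {α : Type} (P1 P2 : AProgram α)
    (hfin1 : P1.Finite) (hfin2 : P2.Finite) (cl : α → α) (s n : α)
    (hheads : ∀ a ∈ heads P2, a ∉ progAtoms P1)
    (hinj : Set.InjOn cl (heads P2))
    (hfresh : ∀ a ∈ heads P2,
      cl a ∉ progAtoms P1 ∪ progAtoms P2 ∧ cl a ≠ s ∧ cl a ≠ n)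
    (hs : s ∉ progAtoms P1 ∪ progAtoms P2) (hn : n ∉ progAtoms P1 ∪ progAtoms P2)
    (hsn : s ≠ n) (M1 M2 : Set α) (hM1 : isAnswerSet P1 M1)
    (hM : isAnswerSet (P1 ∪ satProg s n (cloneProg cl P2)) (M1 ∪ M2)) (M' : Set α) :
    isAnswerSet
        (P2 ∪ fixProg (progAtoms (P1 ∪ satProg s n (cloneProg cl P2))) (M1 ∪ M2)) M' ↔
      ∃ M2', M' = M2 ∪ M2' ∧ isAnswerSet (P2 ∪ fixProg (progAtoms P1) M1) M2' :=
  clone_fix_answer_sets_general P1 P2 cl s n hheads hfresh hs hn M1 M2 hM1 hM M'
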